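/- Let P be a Markov kernel on X and G : X×X → [0,1] measurable; for a probability measure ν on X and n ∈ ℕ define S_ν(n) = E_ν[∏_{i=0}^{n−1} G(X_i, X_{i+1})], the expectation under the law of the Markov chain (X_t)_{t≥0} with kernel P and initial distribution ν. Then for any probability measure μ on X, any x ∈ X, any m ∈ ℕ and any k ∈ {0,…,m}: S_{δ_x}(m) ≤ S_μ(m−k) + 2 ‖P^k(x,·) − μ‖_TV. -/

import Mathlib

open MeasureTheory ProbabilityTheory ENNReal Filter Topology

section Setup

variable {S : Type*} [MeasurableSpace S]

/-- The `t`-fold composition of a Markov kernel. -/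
noncomputable def kpow (P : ProbabilityTheory.Kernel S S) : ℕ → ProbabilityTheory.Kernel S S
  | 0 => ProbabilityTheory.Kernel.id
  | n + 1 => (kpow P n).comp P

/-- `IsTrajMeasure P ν μ` : `μ` is the law on `ℕ → S` of the time-homogeneous Markov chain
with transition kernel `P` and initial distribution `ν`. -/
def IsTrajMeasure (P : ProbabilityTheory.Kernel S S) (ν : MeasureTheory.Measure S)
    (μ : MeasureTheory.Measure (ℕ → S)) : Prop :=
  MeasureTheory.IsProbabilityMeasure μ ∧
    μ.map (fun ω => ω 0) = ν ∧
    ∀ n : ℕ,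
      μ.map (fun ω => ((fun i : Fin (n + 1) => ω (i : ℕ)), ω (n + 1))) =
        (μ.map (fun ω => fun i : Fin (n + 1) => ω (i : ℕ))).compProd
          (P.comap (fun v : Fin (n + 1) → S => v (Fin.last n)) (measurable_pi_apply _))

/-- `Q` is a faithful coupling of the kernel `P` with itself. -/
def IsFaithfulCoupling (P : ProbabilityTheory.Kernel S S)
    (Q : ProbabilityTheory.Kernel (S × S) (S × S)) : Prop :=
  (∀ p : S × S, (Q p).map Prod.fst = P p.1) ∧
    (∀ p : S × S, (Q p).map Prod.snd = P p.2) ∧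
    ∀ x : S, Q (x, x) {q : S × S | q.1 = q.2} = 1

/-- The meeting time `τ = inf {t : X_t = Y_t}` of a coupled trajectory, with value `∞`
if the chains never meet. -/
noncomputable def meetTime (ω : ℕ → S × S) : ℝ≥0∞ :=
  ⨅ (n : ℕ) (_ : (ω n).1 = (ω n).2), (n : ℝ≥0∞)

/-- `G = ∑_{t=0}^{τ-1} (h(X_t) - h(Y_t))` along a coupled trajectory. -/
noncomputable def Gsum (h : S → ℝ) (ω : ℕ → S × S) : ℝ :=
  ∑' t : ℕ, if (t : ℝ≥0∞) < meetTime ω then h (ω t).1 - h (ω t).2 else 0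

/-- Total variation distance between two measures. -/
noncomputable def tvDist (μ ν : MeasureTheory.Measure S) : ℝ :=
  ⨆ A : {A : Set S // MeasurableSet A}, |(μ A.1).toReal - (ν A.1).toReal|

/-- `ζ(s) = ∑_{n ≥ 1} n^{-s}`, as a value in `ℝ≥0∞`. -/
noncomputable def zetaE (s : ℝ) : ℝ≥0∞ := ∑' n : ℕ, ((n : ℝ≥0∞) + 1) ^ (-s)

/-- `π`-irreducibility of a kernel. -/
def PiIrreducible (P : ProbabilityTheory.Kernel S S) (π : MeasureTheory.Measure S) : Prop :=
  ∀ x : S, ∀ A : Set S, MeasurableSet A → 0 < π A → ∃ n : ℕ, 1 ≤ n ∧ 0 < (kpow P n) x A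

/-- `g⋆(x) = ∑_{t=0}^∞ P^t h (x)`. -/
noncomputable def gstar (P : ProbabilityTheory.Kernel S S) (h : S → ℝ) (x : S) : ℝ :=
  ∑' t : ℕ, ∫ z, h z ∂((kpow P t) x)

end Setup

/-
Dropping the first `k` factors of the weight `∏_{i<m} G(X_i, X_{i+1})` can only increase it,
since every factor lies in `[0, 1]`. Let `Q g (z) = ∫ G(z, s) g(s) P(z, ds)` be the Feynman–Kac
operator and `f = Q^{m-k} 1`. Integrating out one transition at a time (the Markov property)
gives `E_x[∏_{k ≤ i < m} G(X_i, X_{i+1})] = ∫ f dP^k(x, ·)`, and the same computation from time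
`0` gives `f(z) = S_{δ_z}(m - k)`, hence `∫ f dμ = S_μ(m - k)`. As `0 ≤ f ≤ 1`, replacing
`P^k(x, ·)` by `μ` in `∫ f dP^k(x, ·)` costs at most `‖P^k(x, ·) - μ‖_TV`.
-/

namespace MeasureTheory.Measure

variable {α β γ : Type*} [MeasurableSpace α] [MeasurableSpace β] [MeasurableSpace γ]

lemma restrict_le_restrict_of_forall_subset {μ ν : Measure α} {s : Set α}
    (hs : MeasurableSet s) (h : ∀ t, MeasurableSet t → t ⊆ s → μ t ≤ ν t) :
    μ.restrict s ≤ ν.restrict s :=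
  Measure.le_iff.mpr fun t ht => by
    rw [Measure.restrict_apply ht, Measure.restrict_apply ht]
    exact h _ (ht.inter hs) Set.inter_subset_right

lemma comap_comp (κ : Kernel β γ) {f : α → β} (hf : Measurable f) (μ : Measure α) :
    κ.comap f hf ∘ₘ μ = κ ∘ₘ μ.map f := by
  rw [← Kernel.comp_deterministic_eq_comap, ← Measure.comp_assoc,
    Measure.deterministic_comp_eq_map]

lemma integral_comp (μ : Measure α) [SFinite μ] (κ : Kernel α β) [IsSFiniteKernel κ]
    {f : β → ℝ} (hf : Integrable f (κ ∘ₘ μ)) :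
    ∫ y, f y ∂(κ ∘ₘ μ) = ∫ x, ∫ y, f y ∂κ x ∂μ := by
  rw [Measure.comp_eq_comp_const_apply] at hf ⊢
  rw [Kernel.integral_comp hf, Kernel.const_apply]

end MeasureTheory.Measure

section UnitIntervalValued

variable {S : Type*} [MeasurableSpace S]

lemma integrable_of_forall_mem_Icc {μ : Measure S} [IsFiniteMeasure μ] {f : S → ℝ}
    (hf : Measurable f) (hf01 : ∀ x, f x ∈ Set.Icc (0 : ℝ) 1) : Integrable f μ :=
  .of_bound hf.aestronglyMeasurable 1 <| ae_of_all _ fun x =>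
    abs_le.mpr ⟨by linarith [(hf01 x).1], (hf01 x).2⟩

lemma integral_mem_Icc_of_forall_mem_Icc {μ : Measure S} [IsProbabilityMeasure μ] {f : S → ℝ}
    (hf01 : ∀ x, f x ∈ Set.Icc (0 : ℝ) 1) : ∫ x, f x ∂μ ∈ Set.Icc (0 : ℝ) 1 := by
  refine ⟨integral_nonneg fun x => (hf01 x).1, ?_⟩
  have := norm_integral_le_of_norm_le_const (μ := μ) (f := f) (C := 1) <| ae_of_all _ fun x =>
    abs_le.mpr ⟨by linarith [(hf01 x).1], (hf01 x).2⟩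
  simpa using (le_abs_self _).trans this

lemma abs_sub_le_tvDist (η μ : Measure S) [IsFiniteMeasure η] [IsFiniteMeasure μ]
    {A : Set S} (hA : MeasurableSet A) : |η.real A - μ.real A| ≤ tvDist η μ := by
  refine le_ciSup (f := fun A : {A : Set S // MeasurableSet A} =>
    |(η A.1).toReal - (μ A.1).toReal|) ⟨η.real .univ + μ.real .univ, ?_⟩ ⟨A, hA⟩
  rintro _ ⟨B, rfl⟩
  have hη : η.real B ≤ η.real .univ := measureReal_mono (Set.subset_univ _)
  have hμ : μ.real B ≤ μ.real .univ := measureReal_mono (Set.subset_univ _)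
  simp only [← measureReal_def, abs_sub_le_iff]
  constructor <;> linarith [measureReal_nonneg (μ := η) (s := B.1),
    measureReal_nonneg (μ := μ) (s := B.1)]

lemma tvDist_nonneg (η μ : Measure S) [IsFiniteMeasure η] [IsFiniteMeasure μ] :
    0 ≤ tvDist η μ := by
  simpa using abs_sub_le_tvDist η μ MeasurableSet.empty

/- On the positive set `A` of a Hahn decomposition for `η - μ`, comparing the integrals of
`1 - f ≥ 0` shows that `f` gains at most `η A - μ A`; on `Aᶜ`, comparing the integrals of `f ≥ 0`
shows that it gains nothing. -/
lemma integral_sub_integral_le_tvDist (η μ : Measure S) [IsFiniteMeasure η] [IsFiniteMeasure μ]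
    {f : S → ℝ} (hf : Measurable f) (hf01 : ∀ x, f x ∈ Set.Icc (0 : ℝ) 1) :
    ∫ x, f x ∂η - ∫ x, f x ∂μ ≤ tvDist η μ := by
  obtain ⟨A, hA, hμη, hημ⟩ := hahn_decomposition η μ
  have hint (ρ : Measure S) [IsFiniteMeasure ρ] : Integrable f ρ :=
    integrable_of_forall_mem_Icc hf hf01
  have hf' : ∀ x, 1 - f x ∈ Set.Icc (0 : ℝ) 1 :=
    fun x => ⟨by linarith [(hf01 x).2], by linarith [(hf01 x).1]⟩
  have h_pos : ∫ x in A, (1 - f x) ∂μ ≤ ∫ x in A, (1 - f x) ∂η :=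
    integral_mono_measure (Measure.restrict_le_restrict_of_forall_subset hA hμη)
      (ae_of_all _ fun x => (hf' x).1) (integrable_of_forall_mem_Icc (measurable_const.sub hf) hf')
  have h_neg : ∫ x in Aᶜ, f x ∂η ≤ ∫ x in Aᶜ, f x ∂μ :=
    integral_mono_measure (Measure.restrict_le_restrict_of_forall_subset hA.compl hημ)
      (ae_of_all _ fun x => (hf01 x).1) (hint _)
  rw [integral_sub (integrable_const _) (hint _), integral_sub (integrable_const _) (hint _),
    setIntegral_const, setIntegral_const, smul_eq_mul, smul_eq_mul, mul_one, mul_one] at h_pos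
  rw [← integral_add_compl hA (hint η), ← integral_add_compl hA (hint μ)]
  linarith [le_abs_self (η.real A - μ.real A), abs_sub_le_tvDist η μ hA]

end UnitIntervalValued

lemma prod_range_le_prod_range_sub {f : ℕ → ℝ} (hf : ∀ i, f i ∈ Set.Icc (0 : ℝ) 1) {k m : ℕ}
    (hk : k ≤ m) : ∏ i ∈ Finset.range m, f i ≤ ∏ i ∈ Finset.range (m - k), f (k + i) := by
  rw [← Finset.prod_range_mul_prod_Ico f hk, Finset.prod_Ico_eq_prod_range]
  exact mul_le_of_le_one_left (Finset.prod_nonneg fun i _ => (hf _).1)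
    (unitInterval.prod_mem fun i _ => hf i).2

section KernelPower

variable {S : Type*} [MeasurableSpace S]

instance isMarkovKernel_kpow (P : Kernel S S) [IsMarkovKernel P] (k : ℕ) :
    IsMarkovKernel (kpow P k) := by
  induction k with
  | zero => rw [kpow]; infer_instance
  | succ k ih => rw [kpow]; infer_instance

lemma kpow_succ' (P : Kernel S S) (k : ℕ) : kpow P (k + 1) = P ∘ₖ kpow P k := by
  induction k with
  | zero => simp [kpow]
  | succ k ih => rw [kpow, ih, Kernel.comp_assoc, ← ih]; rfl

end KernelPower

section FeynmanKac

variable {S : Type*} [MeasurableSpace S]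

noncomputable def feynmanKacOp (P : Kernel S S) (G : S × S → ℝ) (g : S → ℝ) : S → ℝ :=
  fun z => ∫ s, G (z, s) * g s ∂P z

variable {P : Kernel S S} {G : S × S → ℝ}

lemma measurable_feynmanKacOp [IsSFiniteKernel P] (hG : Measurable G) {g : S → ℝ}
    (hg : Measurable g) : Measurable (feynmanKacOp P G g) :=
  (hG.mul (hg.comp measurable_snd)).stronglyMeasurable.integral_kernel_prod_right'.measurable

lemma feynmanKacOp_mem_Icc [IsMarkovKernel P] (hG01 : ∀ q, G q ∈ Set.Icc (0 : ℝ) 1)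
    {g : S → ℝ} (hg01 : ∀ z, g z ∈ Set.Icc (0 : ℝ) 1) (z : S) :
    feynmanKacOp P G g z ∈ Set.Icc (0 : ℝ) 1 :=
  integral_mem_Icc_of_forall_mem_Icc fun s => unitInterval.mul_mem (hG01 _) (hg01 s)

lemma measurable_iterate_feynmanKacOp [IsSFiniteKernel P] (hG : Measurable G) {g : S → ℝ}
    (hg : Measurable g) (n : ℕ) : Measurable ((feynmanKacOp P G)^[n] g) := by
  induction n with
  | zero => exact hg
  | succ n ih => rw [Function.iterate_succ_apply']; exact measurable_feynmanKacOp hG ih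

lemma iterate_feynmanKacOp_mem_Icc [IsMarkovKernel P] (hG01 : ∀ q, G q ∈ Set.Icc (0 : ℝ) 1)
    {g : S → ℝ} (hg01 : ∀ z, g z ∈ Set.Icc (0 : ℝ) 1) (n : ℕ) (z : S) :
    (feynmanKacOp P G)^[n] g z ∈ Set.Icc (0 : ℝ) 1 := by
  induction n generalizing z with
  | zero => exact hg01 z
  | succ n ih => rw [Function.iterate_succ_apply']; exact feynmanKacOp_mem_Icc hG01 ih z

end FeynmanKac

namespace IsTrajMeasure

variable {S : Type*} [MeasurableSpace S] {P : Kernel S S} {ν : Measure S} {ρ : Measure (ℕ → S)}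

section SFinite

variable [IsSFiniteKernel P]

lemma map_eval_succ (hρ : IsTrajMeasure P ν ρ) (n : ℕ) :
    ρ.map (fun ω => ω (n + 1)) = P ∘ₘ ρ.map (fun ω => ω n) := by
  have := hρ.1
  have hpre : Measurable fun ω : ℕ → S => fun i : Fin (n + 1) => ω i := by fun_prop
  rw [← Measure.snd_map_prodMk hpre, hρ.2.2 n, Measure.snd_compProd, Measure.comap_comp,
    Measure.map_map (measurable_pi_apply _) hpre]
  rfl

lemma map_eval (hρ : IsTrajMeasure P ν ρ) (k : ℕ) : ρ.map (fun ω => ω k) = kpow P k ∘ₘ ν := by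
  induction k with
  | zero => rw [hρ.2.1, kpow, Measure.id_comp]
  | succ k ih => rw [hρ.map_eval_succ, ih, Measure.comp_assoc, kpow_succ']

lemma integral_mul_transition (hρ : IsTrajMeasure P ν ρ) {N : ℕ} {F : (ℕ → S) → ℝ}
    {g : S × S → ℝ} (hF : Measurable F) (hFN : ∀ ω ω', (∀ j ≤ N, ω j = ω' j) → F ω = F ω')
    (hg : Measurable g) (hint : Integrable (fun ω => F ω * g (ω N, ω (N + 1))) ρ) :
    ∫ ω, F ω * g (ω N, ω (N + 1)) ∂ρ = ∫ ω, F ω * ∫ s, g (ω N, s) ∂P (ω N) ∂ρ := by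
  have := hρ.1
  let π : (ℕ → S) → (Fin (N + 1) → S) := fun ω i => ω i
  -- `ext` pads a path prefix with its last entry, which `F` cannot see.
  let ext : (Fin (N + 1) → S) → (ℕ → S) := fun v j => v ⟨min j N, by omega⟩
  have hπ : Measurable π := by fun_prop
  have hext : Measurable ext := by fun_prop
  have hF_ext : ∀ ω, F (ext (π ω)) = F ω := fun ω => hFN _ _ fun j hj => by
    simp [ext, π, min_eq_left hj]
  let H : (Fin (N + 1) → S) × S → ℝ := fun p => F (ext p.1) * g (p.1 (Fin.last N), p.2)
  have hH : Measurable H := by fun_prop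
  have hpair : Measurable fun ω => (π ω, ω (N + 1)) := hπ.prodMk (measurable_pi_apply _)
  have hHπ : ∀ ω, H (π ω, ω (N + 1)) = F ω * g (ω N, ω (N + 1)) := fun ω => by
    change F (ext (π ω)) * _ = _; rw [hF_ext]; rfl
  have hint' : Integrable H (ρ.map fun ω => (π ω, ω (N + 1))) :=
    (integrable_map_measure hH.aestronglyMeasurable hpair.aemeasurable).mpr <| by
      simpa [Function.comp_def, hHπ] using hint
  have hK : StronglyMeasurable fun v : Fin (N + 1) → S => ∫ s, H (v, s) ∂P (v (Fin.last N)) :=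
    hH.stronglyMeasurable.integral_kernel_prod_right'
      (κ := P.comap (fun v : Fin (N + 1) → S => v (Fin.last N)) (measurable_pi_apply _))
  calc ∫ ω, F ω * g (ω N, ω (N + 1)) ∂ρ = ∫ p, H p ∂(ρ.map fun ω => (π ω, ω (N + 1))) := by
        rw [integral_map hpair.aemeasurable hH.aestronglyMeasurable]; simp only [hHπ]
    _ = ∫ v, ∫ s, H (v, s) ∂P (v (Fin.last N)) ∂(ρ.map π) := by
        rw [hρ.2.2 N] at hint' ⊢; exact Measure.integral_compProd hint'
    _ = ∫ ω, F ω * ∫ s, g (ω N, s) ∂P (ω N) ∂ρ := by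
        rw [integral_map hπ.aemeasurable hK.aestronglyMeasurable]
        simp only [H, hF_ext, integral_const_mul]; rfl

end SFinite

variable [IsMarkovKernel P] {G : S × S → ℝ}

lemma integral_prod_mul_eq_integral_iterate (hρ : IsTrajMeasure P ν ρ) (hG : Measurable G)
    (hG01 : ∀ q, G q ∈ Set.Icc (0 : ℝ) 1) (n : ℕ) {g : S → ℝ} (hg : Measurable g)
    (hg01 : ∀ z, g z ∈ Set.Icc (0 : ℝ) 1) (k : ℕ) :
    ∫ ω, (∏ i ∈ Finset.range n, G (ω (k + i), ω (k + i + 1))) * g (ω (k + n)) ∂ρ =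
      ∫ ω, (feynmanKacOp P G)^[n] g (ω k) ∂ρ := by
  induction n generalizing g with
  | zero => simp
  | succ n ih =>
    have := hρ.1
    have hstep := hρ.integral_mul_transition (N := k + n)
      (F := fun ω => ∏ i ∈ Finset.range n, G (ω (k + i), ω (k + i + 1)))
      (g := fun q => G q * g q.2) (by fun_prop)
      (fun ω ω' h => Finset.prod_congr rfl fun i hi => by
        have := Finset.mem_range.mp hi
        rw [h (k + i) (by omega), h (k + i + 1) (by omega)])
      (by fun_prop)
      (integrable_of_forall_mem_Icc (by fun_prop) fun ω => unitInterval.mul_mem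
        (unitInterval.prod_mem fun i _ => hG01 _) (unitInterval.mul_mem (hG01 _) (hg01 _)))
    rw [Function.iterate_succ_apply,
      ← ih (measurable_feynmanKacOp hG hg) (feynmanKacOp_mem_Icc hG01 hg01)]
    simp only [Finset.prod_range_succ, mul_assoc, ← add_assoc]
    exact hstep

lemma integral_prod_eq_integral_iterate (hρ : IsTrajMeasure P ν ρ) (hG : Measurable G)
    (hG01 : ∀ q, G q ∈ Set.Icc (0 : ℝ) 1) (n k : ℕ) :
    ∫ ω, ∏ i ∈ Finset.range n, G (ω (k + i), ω (k + i + 1)) ∂ρ =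
      ∫ z, (feynmanKacOp P G)^[n] 1 z ∂(kpow P k ∘ₘ ν) := by
  have h := hρ.integral_prod_mul_eq_integral_iterate hG hG01 n measurable_one
    (fun _ => ⟨zero_le_one, le_rfl⟩) k
  simp only [Pi.one_apply, mul_one] at h
  rw [h, ← hρ.map_eval k, integral_map (measurable_pi_apply k).aemeasurable
    (measurable_iterate_feynmanKacOp hG measurable_one n).aestronglyMeasurable]

end IsTrajMeasure

/-- Comparison of the product functional `S_ν(n) = E_ν[∏ G(X_i,X_{i+1})]`
started at a point with the one started from `μ`, up to a TV error. -/
theorem product_functional_tv_comparison {S : Type*} [MeasurableSpace S]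
    (P : ProbabilityTheory.Kernel S S) [IsMarkovKernel P]
    (ξ : ProbabilityTheory.Kernel S (ℕ → S))
    (hξ : ∀ x : S, IsTrajMeasure P (MeasureTheory.Measure.dirac x) (ξ x))
    (G : S × S → ℝ) (hGmeas : Measurable G) (hG01 : ∀ q, G q ∈ Set.Icc (0 : ℝ) 1)
    (μ : MeasureTheory.Measure S) [IsProbabilityMeasure μ]
    (x : S) (m k : ℕ) (hk : k ≤ m) :
    ∫ ω, ∏ i ∈ Finset.range m, G (ω i, ω (i + 1)) ∂(ξ x) ≤
      (∫ ω, ∏ i ∈ Finset.range (m - k), G (ω i, ω (i + 1)) ∂(μ.bind fun z => ξ z)) +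
        2 * tvDist ((kpow P k) x) μ := by
  have : IsMarkovKernel ξ := ⟨fun z => (hξ z).1⟩
  have hprod_int {ρ : Measure (ℕ → S)} [IsFiniteMeasure ρ] {n : ℕ} {a b : ℕ → ℕ} :
      Integrable (fun ω => ∏ i ∈ Finset.range n, G (ω (a i), ω (b i))) ρ :=
    integrable_of_forall_mem_Icc (by fun_prop) fun ω => unitInterval.prod_mem fun i _ => hG01 _
  set f := (feynmanKacOp P G)^[m - k] 1
  have hf : Measurable f := measurable_iterate_feynmanKacOp hGmeas measurable_one _
  have hf01 := iterate_feynmanKacOp_mem_Icc (P := P) hG01 (fun _ => ⟨zero_le_one, le_rfl⟩) (m - k)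
  have h_shift (z : S) (j : ℕ) :
      ∫ ω, ∏ i ∈ Finset.range (m - k), G (ω (j + i), ω (j + i + 1)) ∂ξ z =
        ∫ y, f y ∂kpow P j z := by
    rw [(hξ z).integral_prod_eq_integral_iterate hGmeas hG01,
      Measure.dirac_bind (Kernel.measurable _)]
  have h_start (z : S) : ∫ ω, ∏ i ∈ Finset.range (m - k), G (ω i, ω (i + 1)) ∂ξ z = f z := by
    simpa [kpow, Kernel.id_apply, integral_dirac' _ _ hf.stronglyMeasurable] using h_shift z 0
  calc ∫ ω, ∏ i ∈ Finset.range m, G (ω i, ω (i + 1)) ∂ξ x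
      ≤ ∫ ω, ∏ i ∈ Finset.range (m - k), G (ω (k + i), ω (k + i + 1)) ∂ξ x :=
        integral_mono hprod_int hprod_int fun ω => prod_range_le_prod_range_sub (fun i => hG01 _) hk
    _ = ∫ y, f y ∂kpow P k x := h_shift x k
    _ ≤ ∫ y, f y ∂μ + tvDist (kpow P k x) μ := by
        linarith [integral_sub_integral_le_tvDist (kpow P k x) μ hf hf01]
    _ ≤ _ := by
        rw [Measure.integral_comp μ ξ hprod_int]
        simp only [h_start]
        linarith [tvDist_nonneg (kpow P k x) μ]
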